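/- Let E be a sharply orthocomplete S-dominating effect algebra. Then E is centrally dominating and centrally orthocomplete. -/

import Mathlib

/-!
Central elements are sharp, so central orthocompleteness is a special case of sharp
orthocompleteness. For the central cover of `x`, take by Zorn a maximal orthogonal set `M` of
central elements disjoint from `x` and let `v` be its orthosum. Sharp dominance makes the
join `v` of sharp elements sharp, and then `v` is central: for every `y`, the orthosum `m` of
the meets `y ∧ d` (`d ∈ M`) is `y ∧ v`, and the rest of `y` over `m` is `y ∧ v'`. Hence
`x ≤ v'`, and for a central `d ≥ x` the central element `d' ∧ v'` is disjoint from `x` and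
orthogonal to `M`, so by maximality it is `0`, that is, `v' ≤ d`.
-/

universe u v

/-- An effect algebra: a partial algebra `(E; ⊕, 0, 1)` with `0 ≠ 1`, where `⊕` is
partially defined (domain `D`), commutative and associative where defined, every
element has a unique orthosupplement (`compl`, skolemizing axiom (Eiii)), and
`1 ⊕ x` defined implies `x = 0`. -/
structure EffectAlgebra (E : Type u) where
  D : E → E → Prop
  oplus : E → E → E
  zero : E
  one : E
  zero_ne_one : zero ≠ one
  D_comm : ∀ x y, D x y → D y x
  oplus_comm : ∀ x y, D x y → oplus x y = oplus y x
  assoc : ∀ x y z, D x y → D (oplus x y) z →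
      D y z ∧ D x (oplus y z) ∧ oplus (oplus x y) z = oplus x (oplus y z)
  assoc' : ∀ x y z, D y z → D x (oplus y z) →
      D x y ∧ D (oplus x y) z ∧ oplus (oplus x y) z = oplus x (oplus y z)
  compl : E → E
  D_compl : ∀ x, D x (compl x)
  oplus_compl : ∀ x, oplus x (compl x) = one
  compl_unique : ∀ x y, D x y → oplus x y = one → y = compl x
  one_max : ∀ x, D one x → x = zero

namespace EffectAlgebra

variable {E : Type u} (A : EffectAlgebra E)

/-- The induced order: `x ≤ y` iff `x ⊕ z = y` for some `z`. -/
def le (x y : E) : Prop := ∃ z, A.D x z ∧ A.oplus x z = y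

def IsLB (S : Set E) (m : E) : Prop := ∀ x ∈ S, A.le m x
def IsUB (S : Set E) (m : E) : Prop := ∀ x ∈ S, A.le x m

/-- `m` is the infimum of `S` computed within the subposet `P`. -/
def IsInfIn (P : Set E) (S : Set E) (m : E) : Prop :=
  m ∈ P ∧ A.IsLB S m ∧ ∀ z ∈ P, A.IsLB S z → A.le z m

/-- `m` is the supremum of `S` computed within the subposet `P`. -/
def IsSupIn (P : Set E) (S : Set E) (m : E) : Prop :=
  m ∈ P ∧ A.IsUB S m ∧ ∀ z ∈ P, A.IsUB S z → A.le m z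

/-- `w` is sharp iff the meet `w ∧ w'` exists in `E` and equals `0`. -/
def Sharp (w : E) : Prop := A.IsInfIn Set.univ {w, A.compl w} A.zero

/-- The set `S(E)` of sharp elements. -/
def sharpSet : Set E := {w | A.Sharp w}

def HasMeet (x y : E) : Prop := ∃ m, A.IsInfIn Set.univ {x, y} m
def HasJoin (x y : E) : Prop := ∃ j, A.IsSupIn Set.univ {x, y} j

/-- Every `x` has a least sharp element above it, which is the infimum of the sharp
elements above `x` both in `E` and in `S(E)`. -/
def SharplyDominating : Prop :=
  ∀ x : E, ∃ w, A.Sharp w ∧ A.le x w ∧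
    A.IsInfIn Set.univ {v | A.Sharp v ∧ A.le x v} w ∧
    A.IsInfIn A.sharpSet {v | A.Sharp v ∧ A.le x v} w

/-- Sharply dominating, and `x ∧ w` exists for every `x ∈ E`, `w ∈ S(E)`. -/
def SDominating : Prop :=
  A.SharplyDominating ∧ ∀ x w : E, A.Sharp w → A.HasMeet x w

end EffectAlgebra

/-- `SumDef A l s` : the orthosum of the finite list `l` is defined and equals `s`. -/
inductive EffectAlgebra.SumDef {E : Type u} (A : EffectAlgebra E) : List E → E → Prop
  | nil : EffectAlgebra.SumDef A [] A.zero
  | cons {x : E} {l : List E} {s : E} : EffectAlgebra.SumDef A l s → A.D x s →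
      EffectAlgebra.SumDef A (x :: l) (A.oplus x s)

namespace EffectAlgebra

variable {E : Type u} (A : EffectAlgebra E)

/-- A family is orthogonal iff every finite subfamily has a defined orthosum. -/
def Orthogonal {ι : Type v} (x : ι → E) : Prop :=
  ∀ l : List ι, l.Nodup → ∃ s, A.SumDef (l.map x) s

/-- The set of finite partial orthosums of a family. -/
def finiteSums {ι : Type v} (x : ι → E) : Set E :=
  {s | ∃ l : List ι, l.Nodup ∧ A.SumDef (l.map x) s}

/-- `v = ⊕ x` : the family is orthogonal and `v` is the supremum in `E` of all
finite partial orthosums. -/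
def HasOrthoSum {ι : Type v} (x : ι → E) (v : E) : Prop :=
  A.Orthogonal x ∧ A.IsSupIn Set.univ (A.finiteSums x) v

/-- Every family dominated elementwise by an orthogonal family of sharp
elements has an orthosum. -/
def SharplyOrthocomplete : Prop :=
  ∀ (ι : Type u) (x w : ι → E), (∀ k, A.Sharp (w k)) → A.Orthogonal w →
    (∀ k, A.le (x k) (w k)) → ∃ v, A.HasOrthoSum x v

/-- `c` is central: for every `y` the meets `y ∧ c`, `y ∧ c'` exist and
`y = (y ∧ c) ∨ (y ∧ c')`. -/
def Central (c : E) : Prop :=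
  ∀ y : E, ∃ m₁ m₂, A.IsInfIn Set.univ {y, c} m₁ ∧
    A.IsInfIn Set.univ {y, A.compl c} m₂ ∧ A.IsSupIn Set.univ {m₁, m₂} y

/-- The center `C(E)`. -/
def centerSet : Set E := {c | A.Central c}

def CentrallyDominating : Prop :=
  ∀ x : E, ∃ c, A.Central c ∧ A.le x c ∧
    A.IsInfIn Set.univ {d | A.Central d ∧ A.le x d} c ∧
    A.IsInfIn A.centerSet {d | A.Central d ∧ A.le x d} c

def CentrallyOrthocomplete : Prop :=
  ∀ (ι : Type u) (x c : ι → E), (∀ k, A.Central (c k)) → A.Orthogonal c →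
    (∀ k, A.le (x k) (c k)) → ∃ v, A.HasOrthoSum x v

/-- `P` is bifull in `E`: for `S ⊆ P`, the join of `S` in `P` exists iff the join
of `S` in `E` exists, and then they coincide. -/
def Bifull (P : Set E) : Prop :=
  ∀ S ⊆ P, (∀ s, A.IsSupIn P S s → A.IsSupIn Set.univ S s) ∧
    (∀ s, A.IsSupIn Set.univ S s → A.IsSupIn P S s)

/-- The subposet `P` is a complete lattice: every subset of `P` has a supremum
(and an infimum) computed within `P`. -/
def CompleteIn (P : Set E) : Prop :=
  ∀ S ⊆ P, (∃ s, A.IsSupIn P S s) ∧ (∃ m, A.IsInfIn P S m)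

/-- `E` is a complete lattice. -/
def Complete : Prop :=
  ∀ S : Set E, (∃ s, A.IsSupIn Set.univ S s) ∧ (∃ m, A.IsInfIn Set.univ S m)

/-- The induced order of `E` is a lattice. -/
def LatticeOrdered : Prop := ∀ x y : E, A.HasMeet x y ∧ A.HasJoin x y

/-- `x ↔ y` : `x ∨ y = x ⊕ (y ⊖ (x ∧ y))`. -/
def Compatible (x y : E) : Prop :=
  ∃ m j z, A.IsInfIn Set.univ {x, y} m ∧ A.IsSupIn Set.univ {x, y} j ∧
    A.D m z ∧ A.oplus m z = y ∧ A.D x z ∧ A.oplus x z = j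

/-- An MV-effect algebra: a lattice effect algebra all of whose pairs of elements
are compatible. -/
def MV : Prop := A.LatticeOrdered ∧ ∀ x y : E, A.Compatible x y

/-- `nx = x ⊕ ⋯ ⊕ x` (`n` times) is defined. -/
def nTimesDef (n : ℕ) (x : E) : Prop := ∃ s, A.SumDef (List.replicate n x) s

/-- `ord x < ∞` for every nonzero `x`. -/
def IsArchimedean : Prop := ∀ x : E, x ≠ A.zero → ∃ n : ℕ, ¬ A.nTimesDef n x

def Atom (a : E) : Prop := a ≠ A.zero ∧ ∀ b, A.le b a → b = A.zero ∨ b = a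

def Atomic : Prop := ∀ x : E, x ≠ A.zero → ∃ a, A.Atom a ∧ A.le a x

/-- The subposet `P` (closed under `'`) is an orthomodular lattice. -/
def OrthomodularIn (P : Set E) : Prop :=
  (∀ x ∈ P, ∀ y ∈ P, (∃ m, A.IsInfIn P {x, y} m) ∧ (∃ j, A.IsSupIn P {x, y} j)) ∧
  A.zero ∈ P ∧ A.one ∈ P ∧ (∀ x ∈ P, A.compl x ∈ P) ∧
  (∀ x ∈ P, A.IsInfIn P {x, A.compl x} A.zero ∧ A.IsSupIn P {x, A.compl x} A.one) ∧
  (∀ x ∈ P, ∀ y ∈ P, A.le x y →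
    ∃ m, A.IsInfIn P {y, A.compl x} m ∧ A.IsSupIn P {x, m} y)

def DistributiveIn (P : Set E) : Prop :=
  ∀ x ∈ P, ∀ y ∈ P, ∀ z ∈ P, ∀ jyz mxy mxz m : E,
    A.IsSupIn P {y, z} jyz → A.IsInfIn P {x, y} mxy → A.IsInfIn P {x, z} mxz →
    A.IsInfIn P {x, jyz} m → A.IsSupIn P {mxy, mxz} m

/-- The subposet `P` is a Boolean algebra (complemented distributive lattice with
bounds, complement given by `'`). -/
def BooleanIn (P : Set E) : Prop :=
  (∀ x ∈ P, ∀ y ∈ P, (∃ m, A.IsInfIn P {x, y} m) ∧ (∃ j, A.IsSupIn P {x, y} j)) ∧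
  A.zero ∈ P ∧ A.one ∈ P ∧ (∀ x ∈ P, A.compl x ∈ P) ∧
  (∀ x ∈ P, A.IsInfIn P {x, A.compl x} A.zero ∧ A.IsSupIn P {x, A.compl x} A.one) ∧
  A.DistributiveIn P

/-- A block: a maximal set of pairwise compatible elements. -/
def Block (M : Set E) : Prop :=
  (∀ x ∈ M, ∀ y ∈ M, A.Compatible x y) ∧
  ∀ N : Set E, M ⊆ N → (∀ x ∈ N, ∀ y ∈ N, A.Compatible x y) → N = M

def AtomIn (M : Set E) (a : E) : Prop :=
  a ∈ M ∧ a ≠ A.zero ∧ ∀ b ∈ M, A.le b a → b = A.zero ∨ b = a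

def AtomicIn (M : Set E) : Prop :=
  ∀ x ∈ M, x ≠ A.zero → ∃ a, A.AtomIn M a ∧ A.le a x

end EffectAlgebra

namespace EffectAlgebra

variable {E : Type u} (A : EffectAlgebra E)

theorem compl_one : A.compl A.one = A.zero := A.one_max _ (A.D_compl A.one)

theorem D_zero_one : A.D A.zero A.one :=
  A.compl_one ▸ A.D_comm _ _ (A.D_compl A.one)

theorem zero_oplus_one : A.oplus A.zero A.one = A.one := by
  rw [A.oplus_comm _ _ A.D_zero_one, ← A.compl_one, A.oplus_compl]

theorem compl_zero : A.compl A.zero = A.one :=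
  (A.compl_unique _ _ A.D_zero_one A.zero_oplus_one).symm

@[simp]
theorem compl_compl (x : E) : A.compl (A.compl x) = x := by
  have hD : A.D (A.compl x) x := A.D_comm _ _ (A.D_compl x)
  refine (A.compl_unique _ _ hD ?_).symm
  rw [A.oplus_comm _ _ hD, A.oplus_compl]

theorem compl_injective : Function.Injective A.compl := fun x y h => by
  rw [← A.compl_compl x, h, A.compl_compl]

theorem D_zero (x : E) : A.D A.zero x := by
  have h : A.D A.zero (A.oplus x (A.compl x)) := by rw [A.oplus_compl]; exact A.D_zero_one
  exact (A.assoc' _ _ _ (A.D_compl x) h).1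

@[simp]
theorem zero_oplus (x : E) : A.oplus A.zero x = x := by
  have h : A.D A.zero (A.oplus x (A.compl x)) := by rw [A.oplus_compl]; exact A.D_zero_one
  obtain ⟨-, hD, heq⟩ := A.assoc' _ _ _ (A.D_compl x) h
  have h1 : A.oplus (A.oplus A.zero x) (A.compl x) = A.one := by
    rw [heq, A.oplus_compl, A.zero_oplus_one]
  rw [← A.compl_compl (A.oplus A.zero x), ← A.compl_unique _ _ hD h1, A.compl_compl]

@[simp]
theorem oplus_zero (x : E) : A.oplus x A.zero = x := by
  rw [A.oplus_comm _ _ (A.D_comm _ _ (A.D_zero x)), A.zero_oplus]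

theorem compl_compl_oplus_oplus {x a : E} (h : A.D x a) :
    A.compl (A.oplus (A.compl (A.oplus x a)) x) = a := by
  obtain ⟨had, hxad, e₁⟩ := A.assoc x a _ h (A.D_compl _)
  have hax : A.oplus a (A.compl (A.oplus x a)) = A.compl x :=
    A.compl_unique _ _ hxad (by rw [← e₁, A.oplus_compl])
  obtain ⟨-, hD, e₂⟩ := A.assoc a _ x had (by rw [hax]; exact A.D_comm _ _ (A.D_compl x))
  have : A.oplus a (A.oplus (A.compl (A.oplus x a)) x) = A.one := by
    rw [← e₂, hax, A.oplus_comm _ _ (A.D_comm _ _ (A.D_compl x)), A.oplus_compl]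
  rw [A.compl_unique _ _ hD this, A.compl_compl]

theorem oplus_left_cancel {x a b : E} (ha : A.D x a) (hb : A.D x b)
    (h : A.oplus x a = A.oplus x b) : a = b := by
  rw [← A.compl_compl_oplus_oplus ha, ← A.compl_compl_oplus_oplus hb, h]

theorem oplus_right_cancel {x a b : E} (ha : A.D a x) (hb : A.D b x)
    (h : A.oplus a x = A.oplus b x) : a = b := by
  rw [A.oplus_comm _ _ ha, A.oplus_comm _ _ hb] at h
  exact A.oplus_left_cancel (A.D_comm _ _ ha) (A.D_comm _ _ hb) h

protected theorem le_refl (x : E) : A.le x x :=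
  ⟨A.zero, A.D_comm _ _ (A.D_zero x), A.oplus_zero x⟩

protected theorem le_trans {x y z : E} (h₁ : A.le x y) (h₂ : A.le y z) : A.le x z := by
  obtain ⟨a, hxa, rfl⟩ := h₁
  obtain ⟨b, hb, rfl⟩ := h₂
  obtain ⟨-, hD, e⟩ := A.assoc x a b hxa hb
  exact ⟨A.oplus a b, hD, e.symm⟩

theorem zero_le (x : E) : A.le A.zero x := ⟨x, A.D_zero x, A.zero_oplus x⟩

theorem le_one (x : E) : A.le x A.one := ⟨A.compl x, A.D_compl x, A.oplus_compl x⟩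

theorem le_oplus_left {x y : E} (h : A.D x y) : A.le x (A.oplus x y) := ⟨y, h, rfl⟩

theorem le_oplus_right {x y : E} (h : A.D x y) : A.le y (A.oplus x y) :=
  ⟨x, A.D_comm _ _ h, A.oplus_comm _ _ (A.D_comm _ _ h)⟩

theorem eq_zero_of_le_zero {x : E} (h : A.le x A.zero) : x = A.zero := by
  obtain ⟨z, hD, hz⟩ := h
  obtain ⟨hz1, -⟩ := A.assoc x z A.one hD (by rw [hz]; exact A.D_zero_one)
  rw [A.one_max z (A.D_comm _ _ hz1), A.oplus_zero] at hz
  exact hz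

protected theorem le_antisymm {x y : E} (h₁ : A.le x y) (h₂ : A.le y x) : x = y := by
  obtain ⟨a, hxa, rfl⟩ := h₁
  obtain ⟨b, hb, hab⟩ := h₂
  obtain ⟨hD, hD', e⟩ := A.assoc x a b hxa hb
  have hab0 : A.oplus a b = A.zero :=
    A.oplus_left_cancel hD' (A.D_comm _ _ (A.D_zero x)) (by rw [← e, hab, A.oplus_zero])
  rw [A.eq_zero_of_le_zero ⟨b, hD, hab0⟩, A.oplus_zero]

theorem le_compl_of_D {x y : E} (h : A.D x y) : A.le x (A.compl y) := by
  obtain ⟨hD, hD', e⟩ := A.assoc y x _ (A.D_comm _ _ h) (A.D_compl _)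
  exact ⟨_, hD, A.compl_unique _ _ hD' (by rw [← e, A.oplus_compl])⟩

theorem le_compl_iff_D {x y : E} : A.le x (A.compl y) ↔ A.D x y := by
  refine ⟨fun ⟨z, hD, hz⟩ => ?_, A.le_compl_of_D⟩
  have h : A.D y (A.oplus x z) := by rw [hz]; exact A.D_compl y
  exact A.D_comm _ _ (A.assoc' y x z hD h).1

theorem le_compl_comm {x y : E} : A.le x (A.compl y) ↔ A.le y (A.compl x) := by
  rw [A.le_compl_iff_D, A.le_compl_iff_D]
  exact ⟨A.D_comm _ _, A.D_comm _ _⟩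

theorem compl_le_compl {x y : E} (h : A.le x y) : A.le (A.compl y) (A.compl x) :=
  A.le_compl_comm.1 (by rwa [A.compl_compl])

theorem D_of_le_left {a b c : E} (h : A.le a b) (hD : A.D b c) : A.D a c :=
  A.le_compl_iff_D.1 (A.le_trans h (A.le_compl_iff_D.2 hD))

theorem D_of_le_right {a b c : E} (h : A.le a b) (hD : A.D c b) : A.D c a :=
  A.D_comm _ _ (A.D_of_le_left h (A.D_comm _ _ hD))

theorem D_of_le_of_le_compl {p q c : E} (hp : A.le p c) (hq : A.le q (A.compl c)) : A.D p q :=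
  A.D_of_le_right hq (A.D_of_le_left hp (A.D_compl c))

theorem oplus_le_oplus_left {a b c : E} (h : A.le a b) (hD : A.D b c) :
    A.le (A.oplus a c) (A.oplus b c) := by
  obtain ⟨z, hz, rfl⟩ := h
  obtain ⟨hzc, hD', e⟩ := A.assoc a z c hz hD
  rw [A.oplus_comm _ _ hzc] at hD' e
  obtain ⟨-, hD'', e'⟩ := A.assoc' a c z (A.D_comm _ _ hzc) hD'
  exact ⟨z, hD'', by rw [e, e']⟩

theorem oplus_le_oplus_right {a b c : E} (h : A.le a b) (hD : A.D c b) :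
    A.le (A.oplus c a) (A.oplus c b) := by
  have hca : A.D c a := A.D_of_le_right h hD
  rw [A.oplus_comm _ _ hca, A.oplus_comm _ _ hD]
  exact A.oplus_le_oplus_left h (A.D_comm _ _ hD)

theorem oplus_le_oplus {a b c d : E} (h₁ : A.le a b) (h₂ : A.le c d) (hD : A.D b d) :
    A.le (A.oplus a c) (A.oplus b d) :=
  A.le_trans (A.oplus_le_oplus_right h₂ (A.D_of_le_left h₁ hD)) (A.oplus_le_oplus_left h₁ hD)

theorem le_of_oplus_le_oplus_right {a b c : E} (hac : A.D a c) (hbc : A.D b c)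
    (h : A.le (A.oplus a c) (A.oplus b c)) : A.le a b := by
  obtain ⟨z, hz, hsum⟩ := h
  obtain ⟨hcz, hD, e⟩ := A.assoc a c z hac hz
  rw [A.oplus_comm _ _ hcz] at hD e
  obtain ⟨haz, hD', e'⟩ := A.assoc' a z c (A.D_comm _ _ hcz) hD
  exact ⟨z, haz, A.oplus_right_cancel hD' hbc (by rw [e', ← e, hsum])⟩

theorem le_of_oplus_le_oplus_left {a b c : E} (hca : A.D c a) (hcb : A.D c b)
    (h : A.le (A.oplus c a) (A.oplus c b)) : A.le a b := by
  rw [A.oplus_comm _ _ hca, A.oplus_comm _ _ hcb] at h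
  exact A.le_of_oplus_le_oplus_right (A.D_comm _ _ hca) (A.D_comm _ _ hcb) h

theorem le_of_oplus_eq_oplus {a b c d : E} (hab : A.D a b) (hcd : A.D c d)
    (h : A.oplus a b = A.oplus c d) (hac : A.le a c) : A.le d b := by
  obtain ⟨r, har, rfl⟩ := hac
  obtain ⟨hrd, hD, e⟩ := A.assoc a r d har hcd
  rw [A.oplus_left_cancel hab hD (h.trans e)]
  exact A.le_oplus_right hrd

theorem oplus_left_comm {a b u : E} (hau : A.D a u) (hb : A.D b (A.oplus a u)) :
    A.D b u ∧ A.D a (A.oplus b u) ∧ A.oplus b (A.oplus a u) = A.oplus a (A.oplus b u) := by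
  obtain ⟨hba, hbau, e⟩ := A.assoc' b a u hau hb
  rw [A.oplus_comm _ _ hba] at hbau e
  obtain ⟨hbu, habu, e'⟩ := A.assoc a b u (A.D_comm _ _ hba) hbau
  exact ⟨hbu, habu, e.symm.trans e'⟩

theorem oplus_compl_oplus {c d : E} (h : A.D c d) :
    A.D d (A.compl (A.oplus c d)) ∧ A.oplus d (A.compl (A.oplus c d)) = A.compl c := by
  obtain ⟨hD, hD', e⟩ := A.assoc c d _ h (A.D_compl _)
  exact ⟨hD, A.compl_unique _ _ hD' (by rw [← e, A.oplus_compl])⟩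

section Bounds

variable {A} {S : Set E} {x y m z : E}

theorem isLB_pair : A.IsLB {x, y} m ↔ A.le m x ∧ A.le m y := by
  simp [IsLB]

theorem isUB_pair : A.IsUB {x, y} m ↔ A.le x m ∧ A.le y m := by
  simp [IsUB]

theorem isInfIn_pair (h₁ : A.le m x) (h₂ : A.le m y)
    (h : ∀ z, A.le z x → A.le z y → A.le z m) : A.IsInfIn Set.univ {x, y} m :=
  ⟨trivial, isLB_pair.2 ⟨h₁, h₂⟩, fun z _ hz => (isLB_pair.1 hz).elim (h z)⟩

theorem isSupIn_pair (h₁ : A.le x m) (h₂ : A.le y m)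
    (h : ∀ z, A.le x z → A.le y z → A.le m z) : A.IsSupIn Set.univ {x, y} m :=
  ⟨trivial, isUB_pair.2 ⟨h₁, h₂⟩, fun z _ hz => (isUB_pair.1 hz).elim (h z)⟩

theorem isInfIn_pair_of_le (h : A.le x y) : A.IsInfIn Set.univ {x, y} x :=
  isInfIn_pair (A.le_refl x) h fun _ hz _ => hz

theorem isInfIn_of_mem {P : Set E} (hP : m ∈ P) (hS : m ∈ S) (h : A.IsLB S m) :
    A.IsInfIn P S m :=
  ⟨hP, h, fun _ _ hz => hz m hS⟩

theorem IsInfIn.inf_le_left (h : A.IsInfIn Set.univ {x, y} m) : A.le m x :=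
  (isLB_pair.1 h.2.1).1

theorem IsInfIn.inf_le_right (h : A.IsInfIn Set.univ {x, y} m) : A.le m y :=
  (isLB_pair.1 h.2.1).2

theorem IsInfIn.le_inf (h : A.IsInfIn Set.univ {x, y} m) (hx : A.le z x) (hy : A.le z y) :
    A.le z m :=
  h.2.2 z trivial (isLB_pair.2 ⟨hx, hy⟩)

theorem IsSupIn.le_sup_left (h : A.IsSupIn Set.univ {x, y} m) : A.le x m :=
  (isUB_pair.1 h.2.1).1

theorem IsSupIn.le_sup_right (h : A.IsSupIn Set.univ {x, y} m) : A.le y m :=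
  (isUB_pair.1 h.2.1).2

theorem IsSupIn.sup_le (h : A.IsSupIn Set.univ {x, y} m) (hx : A.le x z) (hy : A.le y z) :
    A.le m z :=
  h.2.2 z trivial (isUB_pair.2 ⟨hx, hy⟩)

theorem IsInfIn.unique {m' : E} (h : A.IsInfIn Set.univ S m) (h' : A.IsInfIn Set.univ S m') :
    m = m' :=
  A.le_antisymm (h'.2.2 m trivial h.2.1) (h.2.2 m' trivial h'.2.1)

theorem IsSupIn.unique {m' : E} (h : A.IsSupIn Set.univ S m) (h' : A.IsSupIn Set.univ S m') :
    m = m' :=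
  A.le_antisymm (h.2.2 m' trivial h'.2.1) (h'.2.2 m trivial h.2.1)

theorem IsSupIn.le_compl (h : A.IsSupIn Set.univ S m) (hz : ∀ s ∈ S, A.le z (A.compl s)) :
    A.le z (A.compl m) :=
  A.le_compl_comm.1 (h.2.2 _ trivial fun s hs => A.le_compl_comm.1 (hz s hs))

theorem IsSupIn.oplus_le {u : E} (h : A.IsSupIn Set.univ S m) (hzu : A.le z u)
    (hS : ∀ w ∈ S, A.D w z ∧ A.le (A.oplus w z) u) : A.le (A.oplus m z) u := by
  obtain ⟨r, hzr, rfl⟩ := hzu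
  have hrz := A.D_comm _ _ hzr
  rw [A.oplus_comm _ _ hzr]
  refine A.oplus_le_oplus_left (h.2.2 r trivial fun w hw => ?_) hrz
  obtain ⟨hwz, hle⟩ := hS w hw
  exact A.le_of_oplus_le_oplus_right hwz hrz (by rwa [A.oplus_comm _ _ hzr] at hle)

theorem IsInfIn.assoc {c d p a g : E} (hp : A.IsInfIn Set.univ {y, c} p)
    (ha : A.IsInfIn Set.univ {p, d} a) (hg : A.IsInfIn Set.univ {c, d} g) :
    A.IsInfIn Set.univ {y, g} a :=
  isInfIn_pair (A.le_trans ha.inf_le_left hp.inf_le_left)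
    (hg.le_inf (A.le_trans ha.inf_le_left hp.inf_le_right) ha.inf_le_right)
    fun _ hzy hzg => ha.le_inf (hp.le_inf hzy (A.le_trans hzg hg.inf_le_left))
      (A.le_trans hzg hg.inf_le_right)

end Bounds

def Disjoint (x y : E) : Prop := ∀ z, A.le z x → A.le z y → z = A.zero

section Disjointness

variable {A} {x y p q : E}

theorem Disjoint.isInfIn (h : A.Disjoint x y) : A.IsInfIn Set.univ {x, y} A.zero :=
  isInfIn_pair (A.zero_le x) (A.zero_le y) fun z hx hy => h z hx hy ▸ A.le_refl _

theorem IsInfIn.disjoint (h : A.IsInfIn Set.univ {x, y} A.zero) : A.Disjoint x y :=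
  fun _ hx hy => A.eq_zero_of_le_zero (h.le_inf hx hy)

theorem exists_oplus_eq_oplus_of_le_oplus (hpq : A.D p q) (hp : A.le p y)
    (hy : A.le y (A.oplus p q)) :
    ∃ t, A.le t q ∧ A.D y t ∧ A.oplus p q = A.oplus y t := by
  obtain ⟨r, hpr, rfl⟩ := hp
  obtain ⟨t, hrt, rfl⟩ := A.le_of_oplus_le_oplus_left hpr hpq hy
  obtain ⟨-, hD, e⟩ := A.assoc' p r t hrt hpq
  exact ⟨t, A.le_oplus_right hrt, hD, e.symm⟩

/-- The excess of `p ⊕ q` over `p ∨ q` lies below both `p` and `q`. -/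
theorem oplus_eq_of_isSupIn_of_disjoint (hpq : A.D p q) (hdisj : A.Disjoint p q)
    (hy : A.IsSupIn Set.univ {p, q} y) : A.oplus p q = y := by
  have hqp := A.D_comm _ _ hpq
  have hle : A.le y (A.oplus p q) := hy.sup_le (A.le_oplus_left hpq) (A.le_oplus_right hpq)
  obtain ⟨t, htq, hyt, e⟩ := exists_oplus_eq_oplus_of_le_oplus hpq hy.le_sup_left hle
  obtain ⟨t', htp, hyt', e'⟩ := exists_oplus_eq_oplus_of_le_oplus hqp hy.le_sup_right
    (by rwa [A.oplus_comm _ _ hpq] at hle)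
  have htt' : t = t' := A.oplus_left_cancel hyt hyt' (by rw [← e, ← e', A.oplus_comm _ _ hpq])
  rw [e, hdisj t (htt' ▸ htp) htq, A.oplus_zero]

end Disjointness

section Sharp

variable {A} {w : E}

theorem Sharp.disjoint (hw : A.Sharp w) : A.Disjoint w (A.compl w) := IsInfIn.disjoint hw

theorem Sharp.compl (hw : A.Sharp w) : A.Sharp (A.compl w) := by
  unfold Sharp
  rw [A.compl_compl, Set.pair_comm]
  exact hw

theorem sharp_of_isSupIn (hdom : A.SharplyDominating) {S : Set E} {v : E}
    (hv : A.IsSupIn Set.univ S v) (hS : ∀ s ∈ S, A.Sharp s) : A.Sharp v := by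
  refine Disjoint.isInfIn fun t htv htv' => ?_
  obtain ⟨w, hw, htw, hinf, -⟩ := hdom t
  have hws : ∀ s ∈ S, A.le w (A.compl s) := fun s hs =>
    hinf.2.1 _ ⟨(hS s hs).compl, A.le_trans htv' (A.compl_le_compl (hv.2.1 s hs))⟩
  exact hw.disjoint t htw (A.le_trans htv (A.le_compl_comm.1 (hv.le_compl hws)))

end Sharp

section Central

variable {A} {c d y p q u v : E}

theorem Central.exists_isInfIn (hc : A.Central c) (y : E) :
    ∃ m, A.IsInfIn Set.univ {y, c} m :=
  let ⟨m, _, hm, _⟩ := hc y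
  ⟨m, hm⟩

theorem Central.isSupIn_of_le (hc : A.Central c) (h : A.le c y) (h' : A.le (A.compl c) y) :
    A.IsSupIn Set.univ {c, A.compl c} y := by
  obtain ⟨m, m', hm, hm', hs⟩ := hc y
  rwa [hm.unique (Set.pair_comm y c ▸ isInfIn_pair_of_le h),
    hm'.unique (Set.pair_comm y _ ▸ isInfIn_pair_of_le h')] at hs

/-- `d = c ∧ c'` exists by centrality at `c'`, and both `1` and `d'` are `c ∨ c'`. -/
theorem Central.sharp (hc : A.Central c) : A.Sharp c := by
  obtain ⟨d, -, hd, -⟩ := hc (A.compl c)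
  rw [Set.pair_comm] at hd
  have hsup : A.IsSupIn Set.univ {c, A.compl c} (A.compl d) :=
    hc.isSupIn_of_le (A.le_compl_comm.1 hd.inf_le_right) (A.compl_le_compl hd.inf_le_left)
  have hd0 : d = A.zero := A.compl_injective <| by
    rw [A.compl_zero, hsup.unique (hc.isSupIn_of_le (A.le_one _) (A.le_one _))]
  unfold Sharp
  rwa [← hd0]

theorem Central.compl (hc : A.Central c) : A.Central (A.compl c) := fun y => by
  obtain ⟨m, m', hm, hm', hs⟩ := hc y
  exact ⟨m', m, hm', by rwa [A.compl_compl], by rwa [Set.pair_comm]⟩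

theorem central_zero : A.Central A.zero := fun y =>
  ⟨A.zero, y, Set.pair_comm y _ ▸ isInfIn_pair_of_le (A.zero_le y),
    A.compl_zero ▸ isInfIn_pair_of_le (A.le_one y),
    isSupIn_pair (A.zero_le y) (A.le_refl y) fun _ _ h => h⟩

theorem Central.le_of_inf_le (hc : A.Central c) (hp : A.IsInfIn Set.univ {y, c} p)
    (hq : A.IsInfIn Set.univ {y, A.compl c} q) (hpu : A.le p u) (hqu : A.le q u) : A.le y u := by
  obtain ⟨p', q', hp', hq', hs⟩ := hc y
  rw [← hp.unique hp', ← hq.unique hq'] at hs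
  exact hs.sup_le hpu hqu

theorem Central.oplus_inf_eq (hc : A.Central c) (hp : A.IsInfIn Set.univ {y, c} p)
    (hq : A.IsInfIn Set.univ {y, A.compl c} q) : A.D p q ∧ A.oplus p q = y := by
  obtain ⟨p', q', hp', hq', hs⟩ := hc y
  rw [← hp.unique hp', ← hq.unique hq'] at hs
  have hpq := A.D_of_le_of_le_compl hp.inf_le_right hq.inf_le_right
  refine ⟨hpq, oplus_eq_of_isSupIn_of_disjoint hpq (fun t htp htq => ?_) hs⟩
  exact hc.sharp.disjoint t (A.le_trans htp hp.inf_le_right) (A.le_trans htq hq.inf_le_right)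

theorem Central.isSupIn_oplus (hc : A.Central c) (hu : A.le u c) (hv : A.le v (A.compl c)) :
    A.D u v ∧ A.IsSupIn Set.univ {u, v} (A.oplus u v) := by
  have huv := A.D_of_le_of_le_compl hu hv
  refine ⟨huv, isSupIn_pair (A.le_oplus_left huv) (A.le_oplus_right huv) fun t hut hvt => ?_⟩
  obtain ⟨p, q, hp, hq, -⟩ := hc t
  obtain ⟨hpq, rfl⟩ := hc.oplus_inf_eq hp hq
  exact A.oplus_le_oplus (hp.le_inf hut hu) (hq.le_inf hvt hv) hpq

theorem Central.le_of_le_oplus (hc : A.Central c) (hcd : A.D c d) {w : E}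
    (h : A.le w (A.oplus c d)) (h' : A.le w (A.compl c)) : A.le w d := by
  obtain ⟨hcw, hsup⟩ := hc.isSupIn_oplus (A.le_refl c) h'
  exact A.le_of_oplus_le_oplus_left hcw hcd (hsup.sup_le (A.le_oplus_left hcd) h)

theorem Central.isInfIn_oplus (hc : A.Central c) (hcd : A.D c d)
    (hp : A.IsInfIn Set.univ {y, c} p) (hs : A.IsInfIn Set.univ {y, d} q) :
    A.D p q ∧ A.IsInfIn Set.univ {y, A.oplus c d} (A.oplus p q) := by
  have hdc : A.le d (A.compl c) := A.le_compl_of_D (A.D_comm _ _ hcd)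
  have hpq : A.D p q := A.D_of_le_of_le_compl hp.inf_le_right (A.le_trans hs.inf_le_right hdc)
  obtain ⟨p', r, hp', hr, -⟩ := hc y
  obtain ⟨hpr, hy⟩ := hc.oplus_inf_eq hp hr
  have hqr : A.le q r := hr.le_inf hs.inf_le_left (A.le_trans hs.inf_le_right hdc)
  refine ⟨hpq, isInfIn_pair (hy ▸ A.oplus_le_oplus_right hqr hpr)
    (A.oplus_le_oplus hp.inf_le_right hs.inf_le_right hcd) fun z hzy hzcd => ?_⟩
  obtain ⟨zc, zc', hzc, hzc', -⟩ := hc z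
  refine hc.le_of_inf_le hzc hzc' (A.le_trans ?_ (A.le_oplus_left hpq))
    (A.le_trans ?_ (A.le_oplus_right hpq))
  · exact hp.le_inf (A.le_trans hzc.inf_le_left hzy) hzc.inf_le_right
  · exact hs.le_inf (A.le_trans hzc'.inf_le_left hzy)
      (hc.le_of_le_oplus hcd (A.le_trans hzc'.inf_le_left hzcd) hzc'.inf_le_right)

theorem Central.isInfIn_compl_oplus (hd : A.Central d) (hcd : A.D c d) :
    A.IsInfIn Set.univ {A.compl c, A.compl d} (A.compl (A.oplus c d)) := by
  obtain ⟨hde, he⟩ := A.oplus_compl_oplus hcd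
  refine isInfIn_pair (he ▸ A.le_oplus_right hde) (A.le_compl_comm.1 (A.le_compl_of_D hde))
    fun z hzc hzd => hd.le_of_le_oplus hde (he ▸ hzc) hzd

theorem Central.oplus (hc : A.Central c) (hd : A.Central d) (hcd : A.D c d) :
    A.Central (A.oplus c d) := fun y => by
  obtain ⟨p, q, hp, hq, -⟩ := hc y
  obtain ⟨s, -, hs, -⟩ := hd y
  obtain ⟨a, t, ha, ht, -⟩ := hd q
  obtain ⟨hps, hinf⟩ := hc.isInfIn_oplus hcd hp hs
  refine ⟨_, t, hinf, hq.assoc ht (hd.isInfIn_compl_oplus hcd),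
    isSupIn_pair hinf.inf_le_left (A.le_trans ht.inf_le_left hq.inf_le_left)
      fun u hu htu => hc.le_of_inf_le hp hq (A.le_trans (A.le_oplus_left hps) hu) ?_⟩
  have has : A.le a s := hs.le_inf (A.le_trans ha.inf_le_left hq.inf_le_left) ha.inf_le_right
  exact hd.le_of_inf_le ha ht (A.le_trans has (A.le_trans (A.le_oplus_right hps) hu)) htu

/-- With `c = g ⊕ h` for `g = c ∧ d`, `h = c ∧ d'`, one has `g' = c' ⊕ h`, and meets with
`g` and `g'` are computed from those with `c`, `c'`, `d` and `d'`. -/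
theorem Central.inf (hc : A.Central c) (hd : A.Central d) {g : E}
    (hg : A.IsInfIn Set.univ {c, d} g) : A.Central g := fun y => by
  obtain ⟨-, h, -, hh, -⟩ := hd c
  obtain ⟨hgh, hc_eq⟩ := hd.oplus_inf_eq hg hh
  obtain ⟨hhe, he⟩ := A.oplus_compl_oplus hgh
  rw [hc_eq] at hhe he
  have hch : A.D (A.compl c) h := A.D_comm _ _ hhe
  obtain ⟨p, q, hp, hq, -⟩ := hc y
  obtain ⟨a, b, ha, hb, -⟩ := hd p
  obtain ⟨hqb, hinf⟩ := hc.compl.isInfIn_oplus hch hq (hp.assoc hb hh)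
  rw [A.oplus_comm _ _ hch, he] at hinf
  refine ⟨a, _, hp.assoc ha hg, hinf, isSupIn_pair (A.le_trans ha.inf_le_left hp.inf_le_left)
    hinf.inf_le_left fun u hau hu =>
      hc.le_of_inf_le hp hq ?_ (A.le_trans (A.le_oplus_left hqb) hu)⟩
  exact hd.le_of_inf_le ha hb hau (A.le_trans (A.le_oplus_right hqb) hu)

theorem Central.le_compl_of_disjoint (hc : A.Central c) (h : A.Disjoint y c) :
    A.le y (A.compl c) := by
  obtain ⟨p, q, hp, hq, -⟩ := hc y
  obtain ⟨-, hy⟩ := hc.oplus_inf_eq hp hq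
  rw [← hy, h p hp.inf_le_left hp.inf_le_right, A.zero_oplus]
  exact hq.inf_le_right

end Central

section FiniteSums

variable {A} {l : List E} {s t : E}

theorem SumDef.unique (hs : A.SumDef l s) (ht : A.SumDef l t) : s = t := by
  induction hs generalizing t with
  | nil => cases ht; rfl
  | cons _ _ ih => cases ht with | cons ht _ => rw [ih ht]

theorem SumDef.perm {l' : List E} (hl : l.Perm l') (hs : A.SumDef l s) : A.SumDef l' s := by
  induction hl generalizing s with
  | nil => exact hs
  | cons a _ ih => cases hs with | cons hs hD => exact .cons (ih hs) hD
  | swap a b l =>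
    cases hs with
    | cons hs hb => cases hs with
      | cons hs ha =>
        obtain ⟨hbu, habu, e⟩ := A.oplus_left_comm ha hb
        exact e ▸ .cons (.cons hs hbu) habu
  | trans _ _ ih₁ ih₂ => exact ih₂ (ih₁ hs)

theorem SumDef.eq_zero (hs : A.SumDef l s) (hl : ∀ a ∈ l, a = A.zero) : s = A.zero := by
  induction hs with
  | nil => rfl
  | cons _ _ ih =>
    rw [hl _ List.mem_cons_self, ih fun a ha => hl a (List.mem_cons_of_mem _ ha), A.oplus_zero]

theorem SumDef.central (hs : A.SumDef l s) (hl : ∀ a ∈ l, A.Central a) : A.Central s := by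
  induction hs with
  | nil => exact central_zero
  | cons _ hD ih =>
    exact (hl _ List.mem_cons_self).oplus (ih fun a ha => hl a (List.mem_cons_of_mem _ ha)) hD

variable {ι : Type v} {c p : ι → E} {y : E}

theorem finiteSums_central (hc : ∀ i, A.Central (c i)) (hs : s ∈ A.finiteSums c) :
    A.Central s := by
  obtain ⟨l, -, hs⟩ := hs
  exact hs.central (by simpa using fun i _ => hc i)

theorem SumDef.exists_isInfIn_map (hc : ∀ i, A.Central (c i))
    (hp : ∀ i, A.IsInfIn Set.univ {y, c i} (p i)) (l : List ι) (hs : A.SumDef (l.map c) s) :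
    ∃ w, A.SumDef (l.map p) w ∧ A.IsInfIn Set.univ {y, s} w := by
  induction l generalizing s with
  | nil =>
    cases hs
    exact ⟨A.zero, .nil, Set.pair_comm y _ ▸ isInfIn_pair_of_le (A.zero_le y)⟩
  | cons i l ih =>
    cases hs with
    | cons hs hD =>
      obtain ⟨w, hw, hinf⟩ := ih hs
      obtain ⟨hpw, hinf'⟩ := (hc i).isInfIn_oplus hD (hp i) hinf
      exact ⟨_, .cons hw hpw, hinf'⟩

theorem exists_finiteSums_inf (hc : ∀ i, A.Central (c i))
    (hp : ∀ i, A.IsInfIn Set.univ {y, c i} (p i)) (hs : s ∈ A.finiteSums c) :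
    ∃ w ∈ A.finiteSums p, A.IsInfIn Set.univ {y, s} w := by
  obtain ⟨l, hl, hs⟩ := hs
  obtain ⟨w, hw, hinf⟩ := hs.exists_isInfIn_map hc hp l
  exact ⟨w, ⟨l, hl, hw⟩, hinf⟩

theorem exists_finiteSums_of_inf (hc : ∀ i, A.Central (c i)) (hco : A.Orthogonal c)
    (hp : ∀ i, A.IsInfIn Set.univ {y, c i} (p i)) {w : E} (hw : w ∈ A.finiteSums p) :
    ∃ s ∈ A.finiteSums c, A.IsInfIn Set.univ {y, s} w := by
  obtain ⟨l, hl, hw⟩ := hw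
  obtain ⟨s, hs⟩ := hco l hl
  obtain ⟨w', hw', hinf⟩ := hs.exists_isInfIn_map hc hp l
  exact ⟨s, ⟨l, hl, hs⟩, hw.unique hw' ▸ hinf⟩

theorem HasOrthoSum.le {v : E} (hv : A.HasOrthoSum c v) (i : ι) : A.le (c i) v := by
  have hs : A.SumDef ([i].map c) (A.oplus (c i) A.zero) := .cons .nil (A.D_comm _ _ (A.D_zero _))
  simpa using hv.2.2.1 _ ⟨[i], List.nodup_singleton i, hs⟩

end FiniteSums

section OrthoSum

variable {A} {ι : Type v} {c p : ι → E} {v m n y : E}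

theorem orthoSum_inf_le (hc : ∀ i, A.Central (c i)) (hv : A.HasOrthoSum c v)
    (hp : ∀ i, A.IsInfIn Set.univ {y, c i} (p i)) (hm : A.IsSupIn Set.univ (A.finiteSums p) m) :
    A.le m y ∧ A.le m v := by
  refine ⟨hm.2.2 y trivial fun w hw => ?_, hm.2.2 v trivial fun w hw => ?_⟩ <;>
    obtain ⟨s, hs, hinf⟩ := exists_finiteSums_of_inf hc hv.1 hp hw
  · exact hinf.inf_le_left
  · exact A.le_trans hinf.inf_le_right (hv.2.2.1 s hs)

/-- `y ∧ s ≤ m` for every finite partial sum `s`, so the rest `n` of `y` lies below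
`y ∧ s'`. -/
theorem le_compl_of_oplus_eq (hc : ∀ i, A.Central (c i)) (hv : A.HasOrthoSum c v)
    (hp : ∀ i, A.IsInfIn Set.univ {y, c i} (p i)) (hm : A.IsSupIn Set.univ (A.finiteSums p) m)
    (hmn : A.D m n) (hy : A.oplus m n = y) : A.le n (A.compl v) := by
  refine hv.2.le_compl fun s hs => ?_
  obtain ⟨w, hw, hinf⟩ := exists_finiteSums_inf hc hp hs
  obtain ⟨-, q, -, hq, -⟩ := finiteSums_central hc hs y
  obtain ⟨hwq, hwqy⟩ := (finiteSums_central hc hs).oplus_inf_eq hinf hq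
  exact A.le_trans (A.le_of_oplus_eq_oplus hwq hmn (hwqy.trans hy.symm) (hm.2.1 w hw))
    hq.inf_le_right

/-- The rest of `y` over `m` lies below both `v` and `v'`. -/
theorem orthoSum_inf_eq_of_le (hc : ∀ i, A.Central (c i)) (hv : A.HasOrthoSum c v)
    (hvs : A.Sharp v) (hy : A.le y v) (hp : ∀ i, A.IsInfIn Set.univ {y, c i} (p i))
    (hm : A.IsSupIn Set.univ (A.finiteSums p) m) : m = y := by
  obtain ⟨⟨t, hmt, rfl⟩, -⟩ := orthoSum_inf_le hc hv hp hm
  rw [hvs.disjoint t (A.le_trans (A.le_oplus_right hmt) hy)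
    (le_compl_of_oplus_eq hc hv hp hm hmt rfl), A.oplus_zero]

theorem oplus_le_of_mem_finiteSums (hc : ∀ i, A.Central (c i)) (hv : A.HasOrthoSum c v)
    (hp : ∀ i, A.IsInfIn Set.univ {y, c i} (p i)) {w z u : E} (hw : w ∈ A.finiteSums p)
    (hz : A.le z (A.compl v)) (hwu : A.le w u) (hzu : A.le z u) :
    A.D w z ∧ A.le (A.oplus w z) u := by
  obtain ⟨s, hs, hinf⟩ := exists_finiteSums_of_inf hc hv.1 hp hw
  obtain ⟨hwz, hsup⟩ := (finiteSums_central hc hs).isSupIn_oplus hinf.inf_le_right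
    (A.le_trans hz (A.compl_le_compl (hv.2.2.1 s hs)))
  exact ⟨hwz, hsup.sup_le hwu hzu⟩

theorem isInfIn_orthoSum {ι : Type u} {c p : ι → E} (hSO : A.SharplyOrthocomplete)
    (hc : ∀ i, A.Central (c i)) (hv : A.HasOrthoSum c v) (hvs : A.Sharp v)
    (hp : ∀ i, A.IsInfIn Set.univ {y, c i} (p i)) (hm : A.IsSupIn Set.univ (A.finiteSums p) m) :
    A.IsInfIn Set.univ {y, v} m := by
  obtain ⟨hmy, hmv⟩ := orthoSum_inf_le hc hv hp hm
  refine isInfIn_pair hmy hmv fun z hzy hzv => ?_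
  choose pz hpz using fun i => (hc i).exists_isInfIn z
  obtain ⟨r, -, hr⟩ := hSO ι pz c (fun i => (hc i).sharp) hv.1 fun i => (hpz i).inf_le_right
  rw [← orthoSum_inf_eq_of_le hc hv hvs hzv hpz hr]
  refine hr.2.2 m trivial fun wz hwz => ?_
  obtain ⟨s, hs, hinfz⟩ := exists_finiteSums_of_inf hc hv.1 hpz hwz
  obtain ⟨w, hw, hinf⟩ := exists_finiteSums_inf hc hp hs
  exact A.le_trans (hinf.le_inf (A.le_trans hinfz.inf_le_left hzy) hinfz.inf_le_right)
    (hm.2.1 w hw)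

theorem isInfIn_compl_orthoSum (hc : ∀ i, A.Central (c i)) (hv : A.HasOrthoSum c v)
    (hp : ∀ i, A.IsInfIn Set.univ {y, c i} (p i)) (hm : A.IsSupIn Set.univ (A.finiteSums p) m)
    (hmn : A.D m n) (hy : A.oplus m n = y) : A.IsInfIn Set.univ {y, A.compl v} n := by
  refine isInfIn_pair (hy ▸ A.le_oplus_right hmn) (le_compl_of_oplus_eq hc hv hp hm hmn hy)
    fun z hzy hzv => ?_
  have hmz : A.D m z :=
    A.le_compl_iff_D.1 (A.le_trans (orthoSum_inf_le hc hv hp hm).2 (A.le_compl_comm.1 hzv))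
  refine A.le_of_oplus_le_oplus_left hmz hmn (hy ▸ hm.oplus_le hzy fun w hw => ?_)
  obtain ⟨s, -, hinf⟩ := exists_finiteSums_of_inf hc hv.1 hp hw
  exact oplus_le_of_mem_finiteSums hc hv hp hw hzv hinf.inf_le_left hzy

theorem central_of_hasOrthoSum (hdom : A.SharplyDominating) (hSO : A.SharplyOrthocomplete)
    {ι : Type u} {c : ι → E} (hc : ∀ i, A.Central (c i)) (hv : A.HasOrthoSum c v) :
    A.Central v := fun y => by
  have hvs : A.Sharp v := sharp_of_isSupIn hdom hv.2 fun s hs => (finiteSums_central hc hs).sharp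
  choose p hp using fun i => (hc i).exists_isInfIn y
  obtain ⟨m, -, hm⟩ := hSO ι p c (fun i => (hc i).sharp) hv.1 fun i => (hp i).inf_le_right
  obtain ⟨n, hmn, hy⟩ := (orthoSum_inf_le hc hv hp hm).1
  have hnv := le_compl_of_oplus_eq hc hv hp hm hmn hy
  refine ⟨m, n, isInfIn_orthoSum hSO hc hv hvs hp hm, isInfIn_compl_orthoSum hc hv hp hm hmn hy,
    isSupIn_pair (hy ▸ A.le_oplus_left hmn) (hy ▸ A.le_oplus_right hmn) fun u hmu hnu => ?_⟩
  exact hy ▸ hm.oplus_le hnu fun w hw =>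
    oplus_le_of_mem_finiteSums hc hv hp hw hnv (A.le_trans (hm.2.1 w hw) hmu) hnu

theorem disjoint_of_hasOrthoSum (hSO : A.SharplyOrthocomplete) {ι : Type u} {c : ι → E}
    (hc : ∀ i, A.Central (c i)) (hv : A.HasOrthoSum c v) (hvs : A.Sharp v)
    (h : ∀ i, A.Disjoint y (c i)) : A.Disjoint y v := by
  obtain ⟨m, -, hm⟩ := hSO ι (fun _ => A.zero) c (fun i => (hc i).sharp) hv.1
    fun i => A.zero_le _
  have hm0 : m = A.zero := A.eq_zero_of_le_zero <|
    hm.2.2 _ trivial fun w ⟨_, _, hw⟩ => hw.eq_zero (by simp) ▸ A.le_refl _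
  exact IsInfIn.disjoint (hm0 ▸ isInfIn_orthoSum hSO hc hv hvs (fun i => (h i).isInfIn) hm)

end OrthoSum

def IsOrthogonalSet (M : Set E) : Prop :=
  ∀ l : List E, l.Nodup → (∀ a ∈ l, a ∈ M) → ∃ s, A.SumDef l s

section OrthogonalSet

variable {A} {M : Set E}

theorem IsOrthogonalSet.orthogonal_val (hM : A.IsOrthogonalSet M) :
    A.Orthogonal (Subtype.val : M → E) := fun l hl =>
  hM _ (hl.map Subtype.val_injective) fun a ha => by
    obtain ⟨b, -, rfl⟩ := List.mem_map.1 ha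
    exact b.2

theorem mem_finiteSums_val {l : List E} {s : E} (hl : l.Nodup) (hlM : ∀ a ∈ l, a ∈ M)
    (hs : A.SumDef l s) : s ∈ A.finiteSums (Subtype.val : M → E) := by
  lift l to List M using hlM
  exact ⟨l, hl.of_map _, hs⟩

theorem IsOrthogonalSet.insert (hM : A.IsOrthogonalSet M) {e : E}
    (he : ∀ s ∈ A.finiteSums (Subtype.val : M → E), A.D e s) :
    A.IsOrthogonalSet (insert e M) := by
  classical
  intro l hl hlM
  by_cases hel : e ∈ l
  · have hlM' : ∀ a ∈ l.erase e, a ∈ M := fun a ha => by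
      obtain ⟨hae, hal⟩ := hl.mem_erase_iff.1 ha
      exact (hlM a hal).resolve_left hae
    obtain ⟨s, hs⟩ := hM _ (hl.erase e) hlM'
    exact ⟨_, (SumDef.cons hs (he s (mem_finiteSums_val (hl.erase e) hlM' hs))).perm
      (List.perm_cons_erase hel).symm⟩
  · exact hM l hl fun a ha => (hlM a ha).resolve_left fun hae => hel (hae ▸ ha)

theorem isOrthogonalSet_sUnion {𝒞 : Set (Set E)} (hch : IsChain (· ⊆ ·) 𝒞)
    (hne : 𝒞.Nonempty) (h : ∀ M ∈ 𝒞, A.IsOrthogonalSet M) :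
    A.IsOrthogonalSet (⋃₀ 𝒞) := fun l hl hlM => by
  obtain ⟨M, hM, hlM'⟩ :=
    hch.directedOn.exists_mem_subset_of_finite_of_subset_sUnion hne l.finite_toSet hlM
  exact h M hM l hl hlM'

end OrthogonalSet

theorem exists_maximal_central_disjoint (x : E) :
    ∃ M : Set E, (∀ d ∈ M, A.Central d ∧ A.Disjoint x d) ∧ A.IsOrthogonalSet M ∧
      ∀ e, A.Central e → A.Disjoint x e →
        (∀ s ∈ A.finiteSums (Subtype.val : M → E), A.D e s) → e ∈ M := by
  obtain ⟨M, -, hmax⟩ := zorn_subset_nonempty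
    {M : Set E | (∀ d ∈ M, A.Central d ∧ A.Disjoint x d) ∧ A.IsOrthogonalSet M}
    (fun 𝒞 h𝒞 hch hne => ⟨⋃₀ 𝒞, ⟨fun d ⟨M, hM, hd⟩ => (h𝒞 hM).1 d hd,
      isOrthogonalSet_sUnion hch hne fun M hM => (h𝒞 hM).2⟩,
      fun _ => Set.subset_sUnion_of_mem⟩)
    ∅ ⟨by simp, fun l _ hl => ⟨A.zero, List.eq_nil_iff_forall_not_mem.2 hl ▸ .nil⟩⟩
  refine ⟨M, hmax.1.1, hmax.1.2, fun e hec hex he => hmax.2 ⟨?_, hmax.1.2.insert he⟩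
    (Set.subset_insert e M) (Set.mem_insert e M)⟩
  rintro d (rfl | hd)
  exacts [⟨hec, hex⟩, hmax.1.1 d hd]

theorem exists_central_cover (hSO : A.SharplyOrthocomplete)
    (hdom : A.SharplyDominating) (x : E) :
    ∃ γ, A.Central γ ∧ A.le x γ ∧ ∀ d, A.Central d → A.le x d → A.le γ d := by
  obtain ⟨M, hMx, hMo, hmax⟩ := A.exists_maximal_central_disjoint x
  have hc : ∀ i : M, A.Central i.1 := fun i => (hMx i.1 i.2).1
  obtain ⟨v, hv⟩ := hSO M Subtype.val Subtype.val (fun i => (hc i).sharp) hMo.orthogonal_val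
    fun i => A.le_refl _
  have hvc : A.Central v := central_of_hasOrthoSum hdom hSO hc hv
  have hxv : A.Disjoint x v :=
    disjoint_of_hasOrthoSum hSO hc hv hvc.sharp fun i => (hMx i.1 i.2).2
  refine ⟨A.compl v, hvc.compl, hvc.le_compl_of_disjoint hxv, fun d hd hxd => ?_⟩
  obtain ⟨e, he⟩ := hvc.compl.exists_isInfIn (A.compl d)
  have heM : e ∈ M := hmax e (hd.compl.inf hvc.compl he)
    (fun z hzx hze => hd.sharp.disjoint z (A.le_trans hzx hxd) (A.le_trans hze he.inf_le_left))
    fun s hs => A.le_compl_iff_D.1 (A.le_trans he.inf_le_right (A.compl_le_compl (hv.2.2.1 s hs)))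
  have he0 : e = A.zero := hvc.sharp.disjoint e (hv.le ⟨e, heM⟩) he.inf_le_right
  rw [← A.compl_compl d]
  exact hd.compl.le_compl_of_disjoint fun z hzv hzd =>
    A.eq_zero_of_le_zero (he0 ▸ he.le_inf hzd hzv)

end EffectAlgebra

/-- A sharply orthocomplete S-dominating effect algebra is centrally dominating
and centrally orthocomplete. -/
theorem stmt11 {E : Type u} (A : EffectAlgebra E)
    (hSO : A.SharplyOrthocomplete) (hSD : A.SDominating) :
    A.CentrallyDominating ∧ A.CentrallyOrthocomplete := by
  obtain ⟨hdom, -⟩ := hSD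
  refine ⟨fun x => ?_, fun ι x c hc hco hxc => hSO ι x c (fun k => (hc k).sharp) hco hxc⟩
  obtain ⟨γ, hγ, hxγ, hmin⟩ := A.exists_central_cover hSO hdom x
  have hlb : A.IsLB {d | A.Central d ∧ A.le x d} γ := fun d hd => hmin d hd.1 hd.2
  exact ⟨γ, hγ, hxγ, EffectAlgebra.isInfIn_of_mem trivial ⟨hγ, hxγ⟩ hlb,
    EffectAlgebra.isInfIn_of_mem hγ ⟨hγ, hxγ⟩ hlb⟩
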